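/- arXiv:1010.3388 — 4 statements merged into one kernel-verified Lean document; each statement's English description precedes it below -/
import Mathlib

section
/- Let K_{γ} for γ ∈ ℤ² denote the field automorphism of ℂ(x,y) determined by K_{γ}(X_{δ}) = X_{δ}·(1 + X_{γ})^{⟨δ,γ⟩} for all δ ∈ ℤ², where X_{(a,b)} = x^a y^b and ⟨(a,b),(c,d)⟩ = ad − bc. Then with γ₁ = (1,0) and γ₂ = (0,1) one has the pentagon identity K_{γ₂} ∘ K_{γ₁} = K_{γ₁} ∘ K_{γ₁+γ₂} ∘ K_{γ₂}, where (f ∘ g)(h) = f(g(h)). -/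
/-- The field `ℂ(x,y)` of rational functions in two variables. -/
abbrev F0 : Type := FractionRing (MvPolynomial (Fin 2) ℂ)

/-- The Laurent monomial `X_{(a,b)} = x^a y^b` in `ℂ(x,y)`. -/
noncomputable def Xmon (γ : ℤ × ℤ) : F0 :=
  (algebraMap (MvPolynomial (Fin 2) ℂ) F0 (MvPolynomial.X 0)) ^ γ.1 *
    (algebraMap (MvPolynomial (Fin 2) ℂ) F0 (MvPolynomial.X 1)) ^ γ.2

/-- The standard skew-symmetric pairing `⟨(a,b),(c,d)⟩ = ad - bc` on `ℤ²`. -/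
def skewPair (γ δ : ℤ × ℤ) : ℤ := γ.1 * δ.2 - γ.2 * δ.1

/-!
Both sides are `ℂ`-algebra automorphisms of the fraction field `ℂ(x,y)`, so they agree as soon as
they agree on the generators `x = X_{(1,0)}` and `y = X_{(0,1)}`. On these, each `K_γ` is the
explicit substitution `x ↦ x (1 + X_γ)^{γ₂}`, `y ↦ y (1 + X_γ)^{-γ₁}`, and composing the three
substitutions on the right gives the same as the two on the left:
`x ↦ x (1 + y)` and `y ↦ y / (1 + x + x y)`. The denominators met on the way are `1 + x` and
`1 + x + x y`, nonzero because their constant coefficient is.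
-/

open MvPolynomial

theorem IsFractionRing.mvPolynomial_algHom_ext {R σ K A : Type*} [CommRing R] [CommRing K]
    [Algebra (MvPolynomial σ R) K] [IsFractionRing (MvPolynomial σ R) K] [Algebra R K]
    [IsScalarTower R (MvPolynomial σ R) K] [Semiring A] [Algebra R A] {f g : K →ₐ[R] A}
    (h : ∀ i, f (algebraMap (MvPolynomial σ R) K (X i)) =
      g (algebraMap (MvPolynomial σ R) K (X i))) : f = g := by
  have hcomp : f.comp (IsScalarTower.toAlgHom R (MvPolynomial σ R) K) =
      g.comp (IsScalarTower.toAlgHom R (MvPolynomial σ R) K) := algHom_ext h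
  exact AlgHom.coe_ringHom_injective <|
    IsLocalization.ringHom_ext (nonZeroDivisors _) congr(($hcomp : MvPolynomial σ R →+* A))

theorem Xmon_add (γ δ : ℤ × ℤ) : Xmon (γ + δ) = Xmon γ * Xmon δ := by
  have hX (i : Fin 2) : algebraMap (MvPolynomial (Fin 2) ℂ) F0 (X i) ≠ 0 :=
    mt IsFractionRing.to_map_eq_zero_iff.1 (X_ne_zero i)
  simp only [Xmon, Prod.fst_add, Prod.snd_add, zpow_add₀ (hX _)]
  ring

theorem Xmon_one_zero : Xmon (1, 0) = algebraMap (MvPolynomial (Fin 2) ℂ) F0 (X 0) := by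
  simp [Xmon]

theorem Xmon_zero_one : Xmon (0, 1) = algebraMap (MvPolynomial (Fin 2) ℂ) F0 (X 1) := by
  simp [Xmon]

@[simp] theorem skewPair_one_zero (γ : ℤ × ℤ) : skewPair (1, 0) γ = γ.2 := by simp [skewPair]

@[simp] theorem skewPair_zero_one (γ : ℤ × ℤ) : skewPair (0, 1) γ = -γ.1 := by simp [skewPair]

/-- `e₁.trans e₂` applies `e₁` first, so `f ∘ g` corresponds to `g.trans f`. -/
theorem pentagon_identity
    (K : ℤ × ℤ → (F0 ≃ₐ[ℂ] F0))
    (hK : ∀ γ δ : ℤ × ℤ, K γ (Xmon δ) = Xmon δ * (1 + Xmon γ) ^ skewPair δ γ) :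
    (K (1, 0)).trans (K (0, 1)) = ((K (0, 1)).trans (K (1, 1))).trans (K (1, 0)) := by
  have h1x : 1 + Xmon (1, 0) ≠ 0 := by
    rw [Xmon_one_zero, ← map_one (algebraMap (MvPolynomial (Fin 2) ℂ) F0), ← map_add]
    exact mt IsFractionRing.to_map_eq_zero_iff.1 (ne_of_apply_ne constantCoeff (by simp))
  have h1xxy : 1 + Xmon (1, 0) + Xmon (1, 0) * Xmon (0, 1) ≠ 0 := by
    rw [Xmon_one_zero, Xmon_zero_one, ← map_one (algebraMap (MvPolynomial (Fin 2) ℂ) F0),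
      ← map_add, ← map_mul, ← map_add]
    exact mt IsFractionRing.to_map_eq_zero_iff.1 (ne_of_apply_ne constantCoeff (by simp))
  have hxy : Xmon (1, 1) = Xmon (1, 0) * Xmon (0, 1) := Xmon_add (1, 0) (0, 1)
  apply AlgEquiv.coe_toAlgHom_injective
  refine IsFractionRing.mvPolynomial_algHom_ext (σ := Fin 2) fun i => ?_
  fin_cases i <;>
    simp only [Fin.zero_eta, Fin.mk_one, ← Xmon_one_zero, ← Xmon_zero_one, AlgEquiv.coe_toAlgHom,
      AlgEquiv.trans_apply, hK, hxy, skewPair_one_zero, skewPair_zero_one, map_mul, map_add,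
      map_one, map_inv₀, zpow_neg, zpow_one, zpow_zero, neg_zero, mul_one] <;>
    field_simp <;>
    ring
end

section
/- Let ε be an n×n skew-symmetric integer matrix, regarded as a bilinear form B on ℤⁿ with B(e_i,e_j) = ε_{ij} for the standard basis (e_i). Fix an index k and define the mutated vectors e'_k = −e_k and e'_i = e_i + max(ε_{ik},0)·e_k for i ≠ k. Then the mutated matrix ε'_{ij} := B(e'_i, e'_j) is given by: ε'_{ij} = −ε_{ij} if i = k or j = k, and ε'_{ij} = ε_{ij} + max(ε_{ik},0)·max(ε_{kj},0) − max(−ε_{ik},0)·max(−ε_{kj},0) otherwise. -/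
open Finset

lemma max_aux (a b : ℤ) : max (-b) 0 * a + max a 0 * b
    = max a 0 * max b 0 - max (-a) 0 * max (-b) 0 := by
  rcases le_total a 0 with ha | ha <;> rcases le_total b 0 with hb | hb
  · rw [max_eq_right ha, max_eq_right hb, max_eq_left (neg_nonneg.2 ha),
      max_eq_left (neg_nonneg.2 hb)]; ring
  · rw [max_eq_right ha, max_eq_left hb, max_eq_left (neg_nonneg.2 ha),
      max_eq_right (neg_nonpos.2 hb)]; ring
  · rw [max_eq_left ha, max_eq_right hb, max_eq_right (neg_nonpos.2 ha),
      max_eq_left (neg_nonneg.2 hb)]; ring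
  · rw [max_eq_left ha, max_eq_left hb, max_eq_right (neg_nonpos.2 ha),
      max_eq_right (neg_nonpos.2 hb)]; ring

/-- Fomin–Zelevinsky matrix mutation from seed mutation: if `e'_k = -e_k` and
`e'_i = e_i + [ε_{ik}]₊ e_k` for `i ≠ k`, then the mutated exchange matrix
`ε'_{ij} = B(e'_i, e'_j)` is given by the standard mutation rule. -/
theorem seed_mutation_exchange_matrix (n : ℕ) (ε : Matrix (Fin n) (Fin n) ℤ)
    (hskew : ∀ i j, ε j i = -ε i j) (k : Fin n) :
    ∀ i j,
      (∑ s, ∑ t,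
        ((if i = k then -(Pi.single k 1 : Fin n → ℤ)
          else (Pi.single i 1 : Fin n → ℤ) + max (ε i k) 0 • (Pi.single k 1 : Fin n → ℤ)) s)
        * ε s t *
        ((if j = k then -(Pi.single k 1 : Fin n → ℤ)
          else (Pi.single j 1 : Fin n → ℤ) + max (ε j k) 0 • (Pi.single k 1 : Fin n → ℤ)) t))
      = if i = k ∨ j = k then -ε i j
        else ε i j + max (ε i k) 0 * max (ε k j) 0 - max (-ε i k) 0 * max (-ε k j) 0 := by
  intro i j
  have hkk : ε k k = 0 := by have := hskew k k; omega
  by_cases hi : i = k <;> by_cases hj : j = k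
  · subst hi; subst hj
    simp [Pi.single_apply, Finset.sum_ite_eq', hkk]
  · subst hi
    simp only [if_pos rfl, if_neg hj, true_or, if_pos,
      Pi.add_apply, Pi.neg_apply, Pi.smul_apply, smul_eq_mul, Pi.single_apply]
    simp [mul_add, Finset.sum_add_distrib, Finset.sum_ite_eq', hkk]
  · subst hj
    simp only [if_pos rfl, if_neg hi, or_true, if_pos,
      Pi.add_apply, Pi.neg_apply, Pi.smul_apply, smul_eq_mul, Pi.single_apply]
    simp [add_mul, mul_add, Finset.sum_add_distrib, Finset.sum_ite_eq', hkk,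
      Finset.mul_sum, mul_comm, mul_left_comm]
  · simp only [if_neg hi, if_neg hj, or_self, Pi.add_apply, Pi.smul_apply,
      smul_eq_mul, Pi.single_apply]
    rw [if_neg (by tauto)]
    simp [add_mul, mul_add, Finset.sum_add_distrib, Finset.sum_ite_eq', hkk,
      Finset.mul_sum, mul_comm, mul_left_comm]
    simp only [hskew k j, neg_neg] at *
    have h1 := max_aux (ε i k) (ε k j)
    ring_nf
    ring_nf at h1 ⊢
    linarith
end

section
/- Let A = ℂ[x^{±1}, y^{±1}][t]/(t³) and define the algebra automorphisms θ₁ : x ↦ x, y ↦ y(1+tx)² and θ₂ : x ↦ x(1+ty)^{−2}, y ↦ y of A. Then the commutator θ₁^{−1} ∘ θ₂^{−1} ∘ θ₁ ∘ θ₂ is the identity modulo t², and modulo t³ it equals the automorphism x ↦ x(1 − t²xy)^{4}, y ↦ y(1 − t²xy)^{−4}. -/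
/-!
Write `σ = θ₂ θ₁` and `τ = θ₁ θ₂`, so that the commutator is `σ⁻¹ τ` and sends `u` to `v` exactly
when `τ u = σ v`. This needs no inverse automorphism, only the inverse of a unit:
`θ₂ x = x (1 + t y)⁻² = x (1 - 2 t y + 3 t² y²)`. Both `θᵢ` fix `t` and are the identity modulo
`t`, hence fix `t² x y`, so `σ` fixes `(1 - t² x y)⁴ = 1 - 4 t² x y`, and the two formulas become
identities between polynomials in `x, y, t` modulo `t³`. Modulo `t²` the commutator then fixes
`x`, `y` and `t`, and an algebra map out of `A` is determined by these three values.
-/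

/-- The Laurent polynomial ring `ℂ[x^{±1}, y^{±1}]` as the group algebra of `ℤ²`. -/
abbrev L12 : Type := AddMonoidAlgebra ℂ (ℤ × ℤ)

/-- `A = ℂ[x^{±1}, y^{±1}][t]/(t³)`. -/
abbrev A12 : Type := Polynomial L12 ⧸ Ideal.span {(Polynomial.X : Polynomial L12) ^ 3}

/-- The image of `x` in `A`. -/
noncomputable def xA : A12 :=
  Ideal.Quotient.mk _ (Polynomial.C (AddMonoidAlgebra.single ((1 : ℤ), (0 : ℤ)) (1 : ℂ)))

/-- The image of `y` in `A`. -/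
noncomputable def yA : A12 :=
  Ideal.Quotient.mk _ (Polynomial.C (AddMonoidAlgebra.single ((0 : ℤ), (1 : ℤ)) (1 : ℂ)))

/-- The image of `t` in `A`. -/
noncomputable def tA : A12 := Ideal.Quotient.mk _ (Polynomial.X : Polynomial L12)

section CubeZero

variable {A : Type*} [CommRing A] {t : A}

theorem eq_mul_of_mul_one_add_mul_sq_eq (ht : t ^ 3 = 0) {a b c : A}
    (h : a * (1 + t * b) ^ 2 = c) : a = c * (1 - 2 * t * b + 3 * t ^ 2 * b ^ 2) := by
  linear_combination (1 - 2 * t * b + 3 * t ^ 2 * b ^ 2) * h - a * (4 * b ^ 3 + 3 * t * b ^ 4) * ht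

theorem one_sub_sq_mul_pow (ht : t ^ 3 = 0) (a : A) (n : ℕ) :
    (1 - t ^ 2 * a) ^ n = 1 - n * (t ^ 2 * a) := by
  induction n with
  | zero => simp
  | succ n ih =>
    rw [pow_succ, ih]
    push_cast
    linear_combination (n * t * a ^ 2) * ht

theorem map_sq_mul_eq_of_map_eq_add_mul {F : Type*} [FunLike F A A] [RingHomClass F A A]
    (ht : t ^ 3 = 0) {f : F} (hft : f t = t) {a p : A} (ha : f a = a + t * p) :
    f (t ^ 2 * a) = t ^ 2 * a := by
  rw [map_mul, map_pow, hft, ha]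
  linear_combination p * ht

end CubeZero

section Commutator

variable {R A : Type*} [CommSemiring R] [CommRing A] [Algebra R A] {t x y : A} {θ₁ θ₂ : A ≃ₐ[R] A}

theorem commutator_apply_of_pow_three_eq_zero (ht : t ^ 3 = 0)
    (h1x : θ₁ x = x) (h1y : θ₁ y = y * (1 + t * x) ^ 2) (h1t : θ₁ t = t)
    (h2x : θ₂ x = x * (1 - 2 * t * y + 3 * t ^ 2 * y ^ 2)) (h2y : θ₂ y = y) (h2t : θ₂ t = t) :
    (θ₁⁻¹ * θ₂⁻¹ * θ₁ * θ₂) x = x * (1 - t ^ 2 * x * y) ^ 4 ∧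
    (θ₁⁻¹ * θ₂⁻¹ * θ₁ * θ₂) y * (1 - t ^ 2 * x * y) ^ 4 = y := by
  have hσ : ∀ a, (θ₁.trans θ₂) ((θ₁⁻¹ * θ₂⁻¹ * θ₁ * θ₂) a) = θ₁ (θ₂ a) := fun a => by
    simp [AlgEquiv.mul_apply, AlgEquiv.aut_inv]
  have h1 : θ₁ (t ^ 2 * (x * y)) = t ^ 2 * (x * y) :=
    map_sq_mul_eq_of_map_eq_add_mul ht h1t (p := x * y * (2 * x + t * x ^ 2))
      (by rw [map_mul, h1x, h1y]; ring)
  have h2 : θ₂ (t ^ 2 * (x * y)) = t ^ 2 * (x * y) :=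
    map_sq_mul_eq_of_map_eq_add_mul ht h2t (p := x * y * (3 * t * y ^ 2 - 2 * y))
      (by rw [map_mul, h2x, h2y]; ring)
  have hσc : (θ₁.trans θ₂) ((1 - t ^ 2 * x * y) ^ 4) = 1 - 4 * t ^ 2 * x * y := by
    rw [mul_assoc _ x, one_sub_sq_mul_pow ht, AlgEquiv.trans_apply, map_sub, map_sub, map_one,
      map_one, map_mul, h1, map_mul, h2, map_natCast, map_natCast]
    ring
  constructor
  · apply (θ₁.trans θ₂).injective
    rw [hσ, map_mul, hσc, AlgEquiv.trans_apply, h1x, h2x]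
    simp only [map_mul, map_add, map_sub, map_pow, map_one, map_ofNat, h1x, h1y, h1t]
    linear_combination x * (4 * x * y ^ 2 + 12 * x * y ^ 3 * t - 2 * x ^ 2 * y
      + 18 * x ^ 2 * y ^ 2 * t + 12 * x ^ 3 * y ^ 2 * t ^ 2 + 3 * x ^ 4 * y ^ 2 * t ^ 3) * ht
  · apply (θ₁.trans θ₂).injective
    rw [map_mul, hσ, hσc, AlgEquiv.trans_apply, h2y, h1y]
    simp only [map_mul, map_add, map_pow, map_one, h2x, h2y, h2t]
    linear_combination (-6 * x * y ^ 3 - 4 * x ^ 2 * y ^ 2 - 10 * x ^ 2 * y ^ 3 * t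
      + 12 * x ^ 2 * y ^ 4 * t ^ 2 - 9 * x ^ 2 * y ^ 5 * t ^ 3 - 4 * x ^ 3 * y ^ 2 * t) * ht

end Commutator

open AddMonoidAlgebra in
theorem AddMonoidAlgebra.algHom_ext_int_prod {k B : Type*} [CommSemiring k] [Semiring B]
    [Algebra k B] ⦃f g : k[ℤ × ℤ] →ₐ[k] B⦄
    (h₁ : f (single (1, 0) 1) = g (single (1, 0) 1))
    (h₂ : f (single (0, 1) 1) = g (single (0, 1) 1)) : f = g := by
  have h_zsmul (v : ℤ × ℤ) (hv : f (single v 1) = g (single v 1)) (m : ℤ) :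
      f (single (m • v) 1) = g (single (m • v) 1) :=
    DFunLike.congr_fun (MonoidHom.ext_mint
      (f := (f : k[ℤ × ℤ] →* B).comp ((of k _).comp (zmultiplesHom _ v).toMultiplicative))
      (g := (g : k[ℤ × ℤ] →* B).comp ((of k _).comp (zmultiplesHom _ v).toMultiplicative))
      (by simpa using hv)) (Multiplicative.ofAdd m)
  refine algHom_ext (fun ⟨m, n⟩ => ?_) (Subsingleton.elim _ _)
  have hmn : (single (m, n) 1 : k[ℤ × ℤ]) = single (m • (1, 0)) 1 * single (n • (0, 1)) 1 := by
    simp [single_mul_single]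
  rw [hmn, map_mul, map_mul, h_zsmul _ h₁, h_zsmul _ h₂]

theorem A12.algHom_ext {B : Type*} [Semiring B] [Algebra ℂ B] ⦃f g : A12 →ₐ[ℂ] B⦄
    (hx : f xA = g xA) (hy : f yA = g yA) (ht : f tA = g tA) : f = g :=
  Ideal.Quotient.algHom_ext ℂ <| Polynomial.algHom_ext'
    (AddMonoidAlgebra.algHom_ext_int_prod hx hy) ht

theorem tA_pow_three : tA ^ 3 = 0 :=
  Ideal.Quotient.eq_zero_iff_mem.mpr (Ideal.mem_span_singleton_self _)

/-- The order-2 scattering computation for pure SU(2): the commutator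
`θ₁⁻¹ ∘ θ₂⁻¹ ∘ θ₁ ∘ θ₂` of the automorphisms `θ₁ : x ↦ x, y ↦ y(1+tx)²` and
`θ₂ : x ↦ x(1+ty)⁻², y ↦ y` of `ℂ[x^{±1},y^{±1}][t]/(t³)` is the identity mod `t²`,
and mod `t³` it is `x ↦ x(1-t²xy)⁴, y ↦ y(1-t²xy)⁻⁴` (fixing `t`). -/
theorem su2_scattering_commutator
    (θ₁ θ₂ : A12 ≃ₐ[ℂ] A12)
    (h1x : θ₁ xA = xA) (h1y : θ₁ yA = yA * (1 + tA * xA) ^ 2) (h1t : θ₁ tA = tA)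
    (h2x : θ₂ xA * (1 + tA * yA) ^ 2 = xA) (h2y : θ₂ yA = yA) (h2t : θ₂ tA = tA) :
    (∀ u : A12, θ₁.symm (θ₂.symm (θ₁ (θ₂ u))) - u ∈ Ideal.span {tA ^ 2}) ∧
    θ₁.symm (θ₂.symm (θ₁ (θ₂ xA))) = xA * (1 - tA ^ 2 * xA * yA) ^ 4 ∧
    θ₁.symm (θ₂.symm (θ₁ (θ₂ yA))) * (1 - tA ^ 2 * xA * yA) ^ 4 = yA ∧
    θ₁.symm (θ₂.symm (θ₁ (θ₂ tA))) = tA := by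
  obtain ⟨hx, hy⟩ := commutator_apply_of_pow_three_eq_zero (A := A12) tA_pow_three h1x h1y h1t
    (eq_mul_of_mul_one_add_mul_sq_eq tA_pow_three h2x) h2y h2t
  have ht : θ₁.symm (θ₂.symm (θ₁ (θ₂ tA))) = tA := by
    rw [h2t, h1t, θ₂.symm_apply_eq.mpr h2t.symm, θ₁.symm_apply_eq.mpr h1t.symm]
  refine ⟨fun u => ?_, hx, hy, ht⟩
  set I : Ideal A12 := Ideal.span {tA ^ 2}
  -- `Ideal A12` is built on the quotient semiring structure of `A12`, through which the instance
  -- for ideals of commutative rings is not found.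
  have : I.IsTwoSided := ⟨fun b ha => mul_comm b _ ▸ I.mul_mem_left b ha⟩
  have hc : Ideal.Quotient.mk I (1 - tA ^ 2 * xA * yA) = 1 := by
    rw [map_sub, map_one, map_mul, map_mul,
      Ideal.Quotient.eq_zero_iff_mem.mpr (Ideal.mem_span_singleton_self _), zero_mul, zero_mul,
      sub_zero]
  have hext : (Ideal.Quotient.mkₐ ℂ I).comp (θ₁⁻¹ * θ₂⁻¹ * θ₁ * θ₂).toAlgHom
      = Ideal.Quotient.mkₐ ℂ I := by
    refine A12.algHom_ext ?_ ?_ ?_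
    · simpa [hc] using congrArg (Ideal.Quotient.mk I) hx
    · simpa [hc] using congrArg (Ideal.Quotient.mk I) hy
    · simpa using congrArg (Ideal.Quotient.mk I) ht
  exact Ideal.Quotient.eq.mp (AlgHom.congr_fun hext u)
end

section
/- Let V₅ = {(x₀,x₁,x₂,x₃,x₄) ∈ (ℂˣ)⁵ : x_{i−1}·x_{i+1} = 1 + x_i for all i ∈ ℤ/5}. Then the map (x₀,x₁,x₂,x₃,x₄) ↦ (X,Y,Z,W) = (x₃, x₁, x₀, x₂) is a bijection from V₅ onto {(X,Y,Z,W) ∈ (ℂˣ)⁴ : XY = 1 + W, ZW = 1 + Y, and X ≠ −1}, with inverse given by x₀ = Z, x₁ = Y, x₂ = W, x₃ = X, x₄ = (1+X)/W. -/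
/-- The 'democratic' Fock–Goncharov realization of the Argyres–Douglas moduli space:
5-periodic solutions of the Y-system with all coordinates nonzero. -/
def V5 : Set (Fin 5 → ℂ) :=
  {x | (∀ i, x i ≠ 0) ∧ ∀ i, x (i - 1) * x (i + 1) = 1 + x i}

/-- The generic fiber of the Gross–Siebert toric degeneration (with `X ≠ -1`). -/
def W5 : Set (ℂ × ℂ × ℂ × ℂ) :=
  {p | (p.1 ≠ 0 ∧ p.2.1 ≠ 0 ∧ p.2.2.1 ≠ 0 ∧ p.2.2.2 ≠ 0) ∧
    p.1 * p.2.1 = 1 + p.2.2.2 ∧ p.2.2.1 * p.2.2.2 = 1 + p.2.1 ∧ p.1 ≠ -1}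

/-- The map `(x₀,…,x₄) ↦ (X,Y,Z,W) = (x₃, x₁, x₀, x₂)`. -/
def F5map (x : Fin 5 → ℂ) : ℂ × ℂ × ℂ × ℂ := (x 3, x 1, x 0, x 2)

/-- The inverse map `x₀ = Z, x₁ = Y, x₂ = W, x₃ = X, x₄ = (1+X)/W`. -/
noncomputable def G5map (p : ℂ × ℂ × ℂ × ℂ) : Fin 5 → ℂ :=
  ![p.2.2.1, p.2.1, p.2.2.2, p.1, (1 + p.1) / p.2.2.2]

/-! The relation at `i = 3` determines `x₄ = (1 + x₃)/x₂`, the relations at `i = 1, 2` are the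
two equations of `W5`, and the relations at `i = 0, 4` follow from the other three (the Y-system
closes up after five steps). Under this correspondence `x₄ ≠ 0` becomes `X ≠ -1`. -/

theorem mem_V5_iff {x : Fin 5 → ℂ} :
    x ∈ V5 ↔ (∀ i, x i ≠ 0) ∧ x 4 * x 1 = 1 + x 0 ∧ x 0 * x 2 = 1 + x 1 ∧
      x 1 * x 3 = 1 + x 2 ∧ x 2 * x 4 = 1 + x 3 ∧ x 3 * x 0 = 1 + x 4 := by
  refine and_congr Iff.rfl ⟨fun h => ⟨h 0, h 1, h 2, h 3, h 4⟩, ?_⟩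
  rintro ⟨h0, h1, h2, h3, h4⟩ i
  fin_cases i
  exacts [h0, h1, h2, h3, h4]

theorem F5map_G5map (p : ℂ × ℂ × ℂ × ℂ) : F5map (G5map p) = p := rfl

theorem G5map_F5map {x : Fin 5 → ℂ} (hx : x ∈ V5) : G5map (F5map x) = x := by
  obtain ⟨hne, -, -, -, h3, -⟩ := mem_V5_iff.mp hx
  ext i
  fin_cases i
  iterate 4 rfl
  show (1 + x 3) / x 2 = x 4
  rw [← h3, mul_div_cancel_left₀ _ (hne 2)]

theorem mem_W5_iff {X Y Z W : ℂ} :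
    (X, Y, Z, W) ∈ W5 ↔
      (X ≠ 0 ∧ Y ≠ 0 ∧ Z ≠ 0 ∧ W ≠ 0) ∧ X * Y = 1 + W ∧ Z * W = 1 + Y ∧ X ≠ -1 :=
  Iff.rfl

theorem mapsTo_F5map : Set.MapsTo F5map V5 W5 := by
  intro x hx
  obtain ⟨hne, -, h1, h2, h3, -⟩ := mem_V5_iff.mp hx
  refine mem_W5_iff.mpr ⟨⟨hne 3, hne 1, hne 0, hne 2⟩, by rw [mul_comm, h2], h1, fun hX => ?_⟩
  exact mul_ne_zero (hne 2) (hne 4) (by rw [h3, hX, add_neg_cancel])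

theorem mapsTo_G5map : Set.MapsTo G5map W5 V5 := by
  rintro ⟨X, Y, Z, W⟩ hp
  obtain ⟨⟨hX, hY, hZ, hW⟩, hXY, hZW, hX1⟩ := mem_W5_iff.mp hp
  have h1X : 1 + X ≠ 0 := fun h => hX1 (by linear_combination h)
  refine mem_V5_iff.mpr ⟨fun i => ?_, ?_, hZW, ?_, ?_, ?_⟩
  · fin_cases i <;> simp [G5map, *]
  all_goals simp only [G5map, Matrix.cons_val]
  · field_simp
    linear_combination hXY - hZW
  · linear_combination hXY
  · field_simp
  · field_simp
    linear_combination X * hZW + hXY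

/-- `F5map` is a bijection from `V5` onto `W5`, with inverse `G5map`. -/
theorem fockGoncharov_realization_bijection :
    Set.BijOn F5map V5 W5 ∧ (∀ x ∈ V5, G5map (F5map x) = x) ∧
      ∀ p ∈ W5, F5map (G5map p) = p := by
  have hinv : Set.InvOn G5map F5map V5 W5 :=
    ⟨fun _ hx => G5map_F5map hx, fun p _ => F5map_G5map p⟩
  exact ⟨hinv.bijOn mapsTo_F5map mapsTo_G5map, hinv.1, hinv.2⟩
end
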